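/- arXiv:1502.06847 — 2 statements merged into one kernel-verified Lean document; each statement's English description precedes it below -/
import Mathlib

section
/- Let n ≥ 1, let G and H be additive abelian groups, and let φ : Gⁿ → H. For x ∈ Gⁿ and 1 ≤ i ≤ n let rᵢ(x) ∈ Gⁿ denote x with its i-th coordinate replaced by −(x₁+⋯+xₙ). If φ is totally symmetric, then Φ := φ + Σᵢ₌₁ⁿ φ∘rᵢ satisfies the generalized anti-hexagon equation n·Φ(x) − Σᵢ₌₁ⁿ Φ(rᵢ(x)) = 0 for all x ∈ Gⁿ. If φ is totally skew-symmetric, then Φ := φ − Σᵢ₌₁ⁿ φ∘rᵢ satisfies n·Φ(x) + Σᵢ₌₁ⁿ Φ(rᵢ(x)) = 0 for all x ∈ Gⁿ. -/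
/-!
Write `rᵢ` for `replaceCoord i` and `S φ x = Σⱼ φ (rⱼ x)`. Each `rᵢ` is an involution, and for
`j ≠ i` the composite `rⱼ ∘ rᵢ` is `rⱼ` followed by the transposition of the coordinates `i, j`.
So if every transposition acts on `φ` by the sign `ε = ±1`, then
`S φ (rᵢ x) = φ x + ε • (S φ x - φ (rᵢ x))`, and summing over `i` shows that
`Φ = φ + ε • S φ` satisfies `n • Φ x = ε • Σᵢ Φ (rᵢ x)`.
-/

open Finset

def replaceCoord {n : ℕ} {G : Type*} [AddCommGroup G] (i : Fin n) (x : Fin n → G) :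
    Fin n → G :=
  Function.update x i (-(∑ j, x j))

section ReplaceCoord

variable {n : ℕ} {G : Type*} [AddCommGroup G]

lemma replaceCoord_apply_self (i : Fin n) (x : Fin n → G) :
    replaceCoord i x i = -(∑ j, x j) :=
  Function.update_self ..

lemma replaceCoord_apply_of_ne {i k : Fin n} (h : k ≠ i) (x : Fin n → G) :
    replaceCoord i x k = x k :=
  Function.update_of_ne h ..

lemma sum_replaceCoord (i : Fin n) (x : Fin n → G) :
    ∑ j, replaceCoord i x j = -x i := by
  rw [replaceCoord, sum_update_of_mem (mem_univ i), sum_sdiff_eq_sub (subset_univ {i}),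
    sum_singleton]
  abel

lemma replaceCoord_involutive (i : Fin n) : Function.Involutive (replaceCoord (G := G) i) := by
  intro x
  funext k
  rcases eq_or_ne k i with rfl | h
  · rw [replaceCoord_apply_self, sum_replaceCoord, neg_neg]
  · rw [replaceCoord_apply_of_ne h, replaceCoord_apply_of_ne h]

lemma replaceCoord_replaceCoord_of_ne {i j : Fin n} (h : j ≠ i) (x : Fin n → G) :
    replaceCoord j (replaceCoord i x) = replaceCoord j x ∘ Equiv.swap i j := by
  funext k
  rw [Function.comp_apply]
  rcases eq_or_ne k j with rfl | hkj
  · rw [Equiv.swap_apply_right, replaceCoord_apply_self, sum_replaceCoord,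
      replaceCoord_apply_of_ne h.symm, neg_neg]
  · rcases eq_or_ne k i with rfl | hki
    · rw [Equiv.swap_apply_left, replaceCoord_apply_of_ne hkj, replaceCoord_apply_self,
        replaceCoord_apply_self]
    · rw [Equiv.swap_apply_of_ne_of_ne hki hkj, replaceCoord_apply_of_ne hkj,
        replaceCoord_apply_of_ne hki, replaceCoord_apply_of_ne hkj]

end ReplaceCoord

section SignedSymmetrization

variable {n : ℕ} {G H : Type*} [AddCommGroup G] [AddCommGroup H]

/-- The paper's `Φ` is the case `ε = 1` for symmetric `φ` and `ε = -1` for skew-symmetric `φ`. -/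
def signedSymmetrization (ε : ℤ) (φ : (Fin n → G) → H) (x : Fin n → G) : H :=
  φ x + ε • ∑ i, φ (replaceCoord i x)

lemma sum_comp_replaceCoord_replaceCoord {ε : ℤ} {φ : (Fin n → G) → H}
    (hφ : ∀ i j x, i ≠ j → φ (x ∘ Equiv.swap i j) = ε • φ x) (i : Fin n) (x : Fin n → G) :
    ∑ j, φ (replaceCoord j (replaceCoord i x)) =
      φ x + ε • (∑ j, φ (replaceCoord j x) - φ (replaceCoord i x)) := by
  have hswap : ∀ j ∈ univ.erase i,
      φ (replaceCoord j (replaceCoord i x)) = ε • φ (replaceCoord j x) := fun j hj => by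
    rw [replaceCoord_replaceCoord_of_ne (ne_of_mem_erase hj), hφ i j _ (ne_of_mem_erase hj).symm]
  rw [← add_sum_erase _ _ (mem_univ i), replaceCoord_involutive, sum_congr rfl hswap,
    ← smul_sum, ← sum_erase_eq_sub (mem_univ i)]

theorem nsmul_signedSymmetrization {ε : ℤ} (hε : ε * ε = 1) {φ : (Fin n → G) → H}
    (hφ : ∀ i j x, i ≠ j → φ (x ∘ Equiv.swap i j) = ε • φ x) (x : Fin n → G) :
    n • signedSymmetrization ε φ x =
      ε • ∑ i, signedSymmetrization ε φ (replaceCoord i x) := by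
  have hterm : ∀ i, signedSymmetrization ε φ (replaceCoord i x) =
      ε • φ x + ∑ j, φ (replaceCoord j x) := fun i => by
    rw [signedSymmetrization, sum_comp_replaceCoord_replaceCoord hφ, smul_add, smul_smul ε ε,
      hε, one_smul]
    abel
  rw [sum_congr rfl fun i _ => hterm i, sum_const, card_univ, Fintype.card_fin, smul_comm ε,
    smul_add, smul_smul ε ε, hε, one_smul, signedSymmetrization]

end SignedSymmetrization

theorem generalized_anti_hexagon_symmetrization_general {n : ℕ}
    {G H : Type*} [AddCommGroup G] [AddCommGroup H] (φ : (Fin n → G) → H) :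
    ((∀ (π : Equiv.Perm (Fin n)) (x : Fin n → G), φ (x ∘ π) = φ x) →
      ∀ x : Fin n → G,
        n • (fun y => φ y + ∑ i, φ (replaceCoord i y)) x -
          ∑ i, (fun y => φ y + ∑ i, φ (replaceCoord i y)) (replaceCoord i x) = 0) ∧
    ((∀ (π : Equiv.Perm (Fin n)) (x : Fin n → G),
        φ (x ∘ π) = (Equiv.Perm.sign π : ℤ) • φ x) →
      ∀ x : Fin n → G,
        n • (fun y => φ y - ∑ i, φ (replaceCoord i y)) x +
          ∑ i, (fun y => φ y - ∑ i, φ (replaceCoord i y)) (replaceCoord i x) = 0) := by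
  constructor
  · intro hsym x
    have key := nsmul_signedSymmetrization (ε := 1) (φ := φ) (by norm_num)
      (fun i j y _ => by rw [hsym, one_smul]) x
    simp only [signedSymmetrization, one_smul] at key
    exact sub_eq_zero.mpr key
  · intro hskew x
    have key := nsmul_signedSymmetrization (ε := -1) (φ := φ) (by norm_num)
      (fun i j y hij => by rw [hskew, Equiv.Perm.sign_swap hij]; rfl) x
    simp only [signedSymmetrization, neg_one_smul, ← sub_eq_add_neg] at key
    exact eq_neg_iff_add_eq_zero.mp key

/-- If `φ : Gⁿ → H` is totally symmetric then `Φ := φ + Σᵢ φ∘rᵢ` solves the generalized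
anti-hexagon equation `n·Φ - Σᵢ Φ∘rᵢ = 0`; if `φ` is totally skew-symmetric then
`Φ := φ - Σᵢ φ∘rᵢ` solves `n·Φ + Σᵢ Φ∘rᵢ = 0`. -/
theorem generalized_anti_hexagon_symmetrization {n : ℕ} (hn : 1 ≤ n)
    {G H : Type*} [AddCommGroup G] [AddCommGroup H] (φ : (Fin n → G) → H) :
    ((∀ (π : Equiv.Perm (Fin n)) (x : Fin n → G), φ (x ∘ π) = φ x) →
      ∀ x : Fin n → G,
        n • (fun y => φ y + ∑ i, φ (replaceCoord i y)) x -
          ∑ i, (fun y => φ y + ∑ i, φ (replaceCoord i y)) (replaceCoord i x) = 0) ∧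
    ((∀ (π : Equiv.Perm (Fin n)) (x : Fin n → G),
        φ (x ∘ π) = (Equiv.Perm.sign π : ℤ) • φ x) →
      ∀ x : Fin n → G,
        n • (fun y => φ y - ∑ i, φ (replaceCoord i y)) x +
          ∑ i, (fun y => φ y - ∑ i, φ (replaceCoord i y)) (replaceCoord i x) = 0) :=
  generalized_anti_hexagon_symmetrization_general φ
end

section
/- Let (X, τ) be a torsor, (G,+,0) an additive abelian group with a biadditive map [·,·] : G × G → G, and fix a sign ε ∈ {+1, −1}. Suppose γ : X³ → G satisfies γ∘f₁ + γ∘f₂ = 0. Then the map ∂^γ defined on maps φ : X³ → G by ∂^γφ := [γ, φ∘f₁ + ε·(φ∘f₂)] (pointwise) squares to zero, ∂^γ(∂^γφ) = 0 for all φ, and moreover ∂^γφ itself satisfies the same symmetry as in the ε = +1 hypothesis shape: (∂^γφ)∘f₁ + ε·(∂^γφ)∘f₂ = 0. -/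
/-!
`f₁` and `f₂` are commuting involutions of `X³`, so `f₁` exchanges `p ↔ f₁ p` and `f₂ p ↔ f₃ p`,
while `f₂` exchanges `p ↔ f₂ p` and `f₁ p ↔ f₃ p`. Evaluating `∂^γφ` at `f₁ p` and `f₂ p`
therefore pairs `γ(f₁ p)` and `γ(f₂ p) = -γ(f₁ p)` with the same two values `φ p`, `φ (f₃ p)`;
since `ε² = 1` the two terms cancel. As `∂^γ` only reads its argument through
`ψ ∘ f₁ + ε • ψ ∘ f₂`, this symmetry of `ψ = ∂^γφ` forces `∂^γ(∂^γφ) = 0`.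
-/

section Torsor

variable {X : Type*} {τ : X → X → X → X}

theorem torsor_cancel_right (h1 : ∀ x y : X, τ x y y = x) (h2 : ∀ x y : X, τ y y x = x)
    (h3 : ∀ x y z v w : X, τ (τ x y z) v w = τ x y (τ z v w)) (x y z : X) :
    τ (τ x y z) z y = x := by
  rw [h3, h2, h1]

theorem torsor_cancel_left (h1 : ∀ x y : X, τ x y y = x) (h2 : ∀ x y : X, τ y y x = x)
    (h3 : ∀ x y z v w : X, τ (τ x y z) v w = τ x y (τ z v w)) (x y z : X) :
    τ y x (τ x y z) = z := by
  rw [← h3, h1, h2]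

end Torsor

section TwistedDifferential

variable {P G : Type*} [AddCommGroup G]

def bracketHom (br : G → G → G) (hbl : ∀ a b c : G, br (a + b) c = br a c + br b c)
    (hbr : ∀ a b c : G, br a (b + c) = br a b + br a c) : G →+ G →+ G :=
  AddMonoidHom.mk' (fun a => AddMonoidHom.mk' (br a) (hbr a))
    fun a b => AddMonoidHom.ext (hbl a b)

/-- `∂^γ φ = [γ, φ ∘ f₁ + ε • φ ∘ f₂]`. -/
def twistedDiff (B : G →+ G →+ G) (γ : P → G) (f₁ f₂ : P → P) (ε : ℤ) (φ : P → G) : P → G :=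
  fun p => B (γ p) (φ (f₁ p) + ε • φ (f₂ p))

variable {B : G →+ G →+ G} {γ : P → G} {f₁ f₂ : P → P} {ε : ℤ}

theorem twistedDiff_comp_add_smul_comp_eq_zero (h₁ : ∀ p, f₁ (f₁ p) = p)
    (h₂ : ∀ p, f₂ (f₂ p) = p) (hcomm : ∀ p, f₂ (f₁ p) = f₁ (f₂ p)) (hε : ε * ε = 1)
    (hγ : ∀ p, γ (f₁ p) + γ (f₂ p) = 0) (φ : P → G) (p : P) :
    twistedDiff B γ f₁ f₂ ε φ (f₁ p) + ε • twistedDiff B γ f₁ f₂ ε φ (f₂ p) = 0 := by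
  have hγ₂ : γ (f₂ p) = -γ (f₁ p) := eq_neg_of_add_eq_zero_right (hγ p)
  have hsign : ε • (φ (f₁ (f₂ p)) + ε • φ p) = φ p + ε • φ (f₁ (f₂ p)) := by
    rw [smul_add, smul_smul, hε, one_smul, add_comm]
  calc twistedDiff B γ f₁ f₂ ε φ (f₁ p) + ε • twistedDiff B γ f₁ f₂ ε φ (f₂ p)
      = B (γ (f₁ p)) (φ p + ε • φ (f₁ (f₂ p)))
          + B (-γ (f₁ p)) (ε • (φ (f₁ (f₂ p)) + ε • φ p)) := by
        simp only [twistedDiff, h₁, h₂, hcomm, hγ₂, map_zsmul]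
    _ = 0 := by rw [hsign, map_neg, AddMonoidHom.neg_apply, add_neg_cancel]

theorem twistedDiff_twistedDiff (h₁ : ∀ p, f₁ (f₁ p) = p) (h₂ : ∀ p, f₂ (f₂ p) = p)
    (hcomm : ∀ p, f₂ (f₁ p) = f₁ (f₂ p)) (hε : ε * ε = 1)
    (hγ : ∀ p, γ (f₁ p) + γ (f₂ p) = 0) (φ : P → G) :
    twistedDiff B γ f₁ f₂ ε (twistedDiff B γ f₁ f₂ ε φ) = 0 := by
  funext p
  change B (γ p) (_ + ε • _) = 0
  rw [twistedDiff_comp_add_smul_comp_eq_zero h₁ h₂ hcomm hε hγ, map_zero]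

end TwistedDifferential

theorem torsor_gamma_diff_squares_to_zero_general {X G : Type*} [AddCommGroup G]
    (τ : X → X → X → X)
    (h1 : ∀ x y : X, τ x y y = x)
    (h2 : ∀ x y : X, τ y y x = x)
    (h3 : ∀ x y z v w : X, τ (τ x y z) v w = τ x y (τ z v w))
    (f1 f2 : X × X × X → X × X × X)
    (hf1 : ∀ x y z : X, f1 (x, y, z) = (τ x y z, z, y))
    (hf2 : ∀ x y z : X, f2 (x, y, z) = (y, x, τ x y z))
    (br : G → G → G)
    (hbl : ∀ a b c : G, br (a + b) c = br a c + br b c)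
    (hbr : ∀ a b c : G, br a (b + c) = br a b + br a c)
    (ε : ℤ) (hε : ε = 1 ∨ ε = -1)
    (γ : X × X × X → G) (hγ : ∀ p, γ (f1 p) + γ (f2 p) = 0)
    (D : (X × X × X → G) → (X × X × X → G))
    (hD : ∀ (φ : X × X × X → G) (p : X × X × X),
      D φ p = br (γ p) (φ (f1 p) + ε • φ (f2 p))) :
    ∀ φ : X × X × X → G,
      D (D φ) = 0 ∧ ∀ p : X × X × X, D φ (f1 p) + ε • D φ (f2 p) = 0 := by
  have hD' : D = twistedDiff (bracketHom br hbl hbr) γ f1 f2 ε :=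
    funext fun φ => funext (hD φ)
  have h₁ : ∀ p, f1 (f1 p) = p := fun ⟨x, y, z⟩ => by
    rw [hf1, hf1, torsor_cancel_right h1 h2 h3]
  have h₂ : ∀ p, f2 (f2 p) = p := fun ⟨x, y, z⟩ => by
    rw [hf2, hf2, torsor_cancel_left h1 h2 h3]
  have hcomm : ∀ p, f2 (f1 p) = f1 (f2 p) := fun ⟨x, y, z⟩ => by
    rw [hf1, hf2, hf2, hf1, torsor_cancel_right h1 h2 h3, torsor_cancel_left h1 h2 h3]
  have hε' : ε * ε = 1 := by rcases hε with rfl | rfl <;> rfl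
  intro φ
  rw [hD']
  exact ⟨twistedDiff_twistedDiff h₁ h₂ hcomm hε' hγ φ,
    twistedDiff_comp_add_smul_comp_eq_zero h₁ h₂ hcomm hε' hγ φ⟩

/-- For a torsor `(X,τ)` with the involutions `f₁, f₂` of `X³`, an abelian group `G` with
a biadditive bracket, a sign `ε = ±1` and `γ : X³ → G` with `γ∘f₁ + γ∘f₂ = 0`, the map
`∂^γφ := [γ, φ∘f₁ + ε·(φ∘f₂)]` squares to zero and satisfies
`(∂^γφ)∘f₁ + ε·(∂^γφ)∘f₂ = 0`. -/
theorem torsor_gamma_diff_squares_to_zero {X G : Type*} [Nonempty X] [AddCommGroup G]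
    (τ : X → X → X → X)
    (h1 : ∀ x y : X, τ x y y = x)
    (h2 : ∀ x y : X, τ y y x = x)
    (h3 : ∀ x y z v w : X, τ (τ x y z) v w = τ x y (τ z v w))
    (f1 f2 : X × X × X → X × X × X)
    (hf1 : ∀ x y z : X, f1 (x, y, z) = (τ x y z, z, y))
    (hf2 : ∀ x y z : X, f2 (x, y, z) = (y, x, τ x y z))
    (br : G → G → G)
    (hbl : ∀ a b c : G, br (a + b) c = br a c + br b c)
    (hbr : ∀ a b c : G, br a (b + c) = br a b + br a c)
    (ε : ℤ) (hε : ε = 1 ∨ ε = -1)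
    (γ : X × X × X → G) (hγ : ∀ p, γ (f1 p) + γ (f2 p) = 0)
    (D : (X × X × X → G) → (X × X × X → G))
    (hD : ∀ (φ : X × X × X → G) (p : X × X × X),
      D φ p = br (γ p) (φ (f1 p) + ε • φ (f2 p))) :
    ∀ φ : X × X × X → G,
      D (D φ) = 0 ∧ ∀ p : X × X × X, D φ (f1 p) + ε • D φ (f2 p) = 0 :=
  torsor_gamma_diff_squares_to_zero_general τ h1 h2 h3 f1 f2 hf1 hf2 br hbl hbr ε hε γ hγ D hD
end
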